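/- arXiv:1701.07313 — 2 statements merged into one kernel-verified Lean document; each statement's English description precedes it below -/
import Mathlib

section
/- For all n ≥ 1 and k ≥ 0, Σ_{S ⊆ {1,…,n}} C(|S|·(n−|S|), k) = Σ_G 2^{c(G)}, where the right-hand sum runs over all bipartite simple graphs G on the labeled vertex set {1,…,n} with exactly k edges, and c(G) denotes the number of connected components of G (isolated vertices count as components). -/
/-!
Double count the pairs `(S, G)` in which every edge of `G` crosses the cut `(S, Sᶜ)`. For fixed
`S` these graphs are the `k`-subsets of the `|S| (n - |S|)` edges of the cut. For fixed `G` the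
sets `S` are the proper `Bool`-colorings of `G` (`S` being the vertices colored `true`); there are
none unless `G` is bipartite, and otherwise all of them arise from one by flipping the colors on
an arbitrary set of connected components, which gives `2 ^ c(G)` of them.
-/

open scoped Classical

open Finset

namespace SimpleGraph

variable {V : Type*} {G : SimpleGraph V}

lemma card_filter_le_ncard_edgeSet_eq [Fintype V] [DecidableEq V] (H : SimpleGraph V) (k : ℕ) :
    #{G : SimpleGraph V | G ≤ H ∧ G.edgeSet.ncard = k} = H.edgeSet.ncard.choose k := by
  rw [Set.ncard_eq_toFinset_card', ← card_powersetCard]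
  have edgeSet_fromEdgeSet_of_subset {E : Finset (Sym2 V)} (hE : E ⊆ H.edgeSet.toFinset) :
      (fromEdgeSet (E : Set (Sym2 V))).edgeSet = E := by
    rw [edgeSet_fromEdgeSet, sdiff_eq_left]
    exact Set.disjoint_left.2 fun e he =>
      not_isDiag_of_mem_edgeSet H (Set.mem_toFinset.1 (hE he))
  refine card_nbij' (fun G => G.edgeSet.toFinset) (fun E => fromEdgeSet E) ?_ ?_ ?_ ?_
  · rintro G hG
    obtain ⟨hle, rfl⟩ := (mem_filter_univ _).1 hG
    rw [mem_coe, mem_powersetCard]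
    exact ⟨Set.toFinset_subset_toFinset.2 (edgeSet_mono hle),
      (Set.ncard_eq_toFinset_card' _).symm⟩
  · rintro E hE
    obtain ⟨hsub, rfl⟩ := mem_powersetCard.1 hE
    rw [mem_coe, mem_filter_univ, ← edgeSet_subset_edgeSet, edgeSet_fromEdgeSet_of_subset hsub,
      Set.ncard_coe_finset]
    exact ⟨fun e he => Set.mem_toFinset.1 (hsub he), rfl⟩
  · intro G _
    simp
  · intro E hE
    simp [edgeSet_fromEdgeSet_of_subset (mem_powersetCard.1 hE).1]

def cutGraph (s : Set V) : SimpleGraph V where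
  Adj u v := ¬(u ∈ s ↔ v ∈ s)
  symm := ⟨fun _ _ h h' => h h'.symm⟩
  loopless := ⟨fun _ h => h Iff.rfl⟩

@[simp]
lemma cutGraph_adj {s : Set V} {u v : V} :
    (cutGraph s).Adj u v ↔ ¬(u ∈ s ↔ v ∈ s) := Iff.rfl

noncomputable def completeBipartiteGraphIsoCutGraph (s : Set V) :
    completeBipartiteGraph s ↥sᶜ ≃g cutGraph s where
  toEquiv := Equiv.Set.sumCompl s
  map_rel_iff' := by
    rintro (⟨a, ha⟩ | ⟨a, ha : a ∉ s⟩) (⟨b, hb⟩ | ⟨b, hb : b ∉ s⟩) <;> simp_all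

lemma ncard_edgeSet_cutGraph [Finite V] (s : Set V) :
    (cutGraph s).edgeSet.ncard = s.ncard * sᶜ.ncard := by
  rw [← Nat.card_coe_set_eq, ← Nat.card_congr (completeBipartiteGraphIsoCutGraph s).mapEdgeSet,
    edgeSet_completeBipartiteGraph, Nat.card_range_of_injective, Nat.card_prod,
    Nat.card_coe_set_eq, Nat.card_coe_set_eq]
  rintro ⟨a, b⟩ ⟨c, d⟩ h
  simpa using h

lemma Reachable.apply_eq_of_forall_adj {α : Sort*} {f : V → α}
    (hf : ∀ ⦃u v⦄, G.Adj u v → f u = f v) {u v : V} (h : G.Reachable u v) : f u = f v := by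
  obtain ⟨p⟩ := h
  induction p with
  | nil => rfl
  | cons hadj _ ih => exact (hf hadj).trans ih

lemma Coloring.xor_eq_of_adj (c₀ c : G.Coloring Bool) {u v : V} (h : G.Adj u v) :
    xor (c₀ u) (c u) = xor (c₀ v) (c v) := by
  rw [Bool.eq_not_iff.2 (c.valid h).symm, Bool.eq_not_iff.2 (c₀.valid h).symm,
    Bool.not_xor_not]

noncomputable def Coloring.equivComponentFlip (c₀ : G.Coloring Bool) :
    G.Coloring Bool ≃ (G.ConnectedComponent → Bool) where
  toFun c := ConnectedComponent.lift (fun v => xor (c₀ v) (c v))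
    fun _ _ p _ => Reachable.apply_eq_of_forall_adj (fun _ _ => c₀.xor_eq_of_adj c) ⟨p⟩
  invFun ε := Coloring.mk (fun v => xor (c₀ v) (ε (G.connectedComponentMk v))) fun h => by
    rw [ConnectedComponent.connectedComponentMk_eq_of_adj h, Ne, Bool.xor_left_inj]
    exact c₀.valid h
  left_inv c := by ext v; simp [Coloring.mk]
  right_inv ε := by
    funext C
    induction C using ConnectedComponent.ind
    simp [Coloring.mk]

lemma natCard_coloring_bool [Finite V] :
    Nat.card (G.Coloring Bool) =
      if G.Colorable 2 then 2 ^ Nat.card G.ConnectedComponent else 0 := by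
  split_ifs with h
  · rw [Nat.card_congr (h.toColoring (by simp)).equivComponentFlip, Nat.card_fun,
      Nat.card_eq_fintype_card (α := Bool), Fintype.card_bool]
  · have : IsEmpty (G.Coloring Bool) := ⟨fun c => h (Fintype.card_bool ▸ c.colorable)⟩
    exact Nat.card_of_isEmpty

noncomputable def subtypeLeCutGraphEquivColoring [Fintype V] :
    {s : Finset V // G ≤ cutGraph s} ≃ G.Coloring Bool where
  toFun s := Coloring.mk (fun v => decide (v ∈ s.1)) fun h => by simpa using s.2 h
  invFun c := ⟨({v | c v} : Finset V), fun u v h => by simpa using c.valid h⟩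
  left_inv s := by ext; simp [Coloring.mk]
  right_inv c := by ext; simp [Coloring.mk]

lemma card_filter_le_cutGraph [Fintype V] :
    #{s : Finset V | G ≤ cutGraph s} =
      if G.Colorable 2 then 2 ^ Nat.card G.ConnectedComponent else 0 := by
  rw [← natCard_coloring_bool, ← Nat.card_congr subtypeLeCutGraphEquivColoring,
    Nat.card_eq_fintype_card, Fintype.card_subtype]

end SimpleGraph

open SimpleGraph in
theorem statement5_general (n k : ℕ) :
    ∑ S : Finset (Fin n), (S.card * (n - S.card)).choose k
      = ∑ G ∈ Finset.univ.filter
          (fun G : SimpleGraph (Fin n) => G.Colorable 2 ∧ G.edgeSet.ncard = k),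
          2 ^ (Nat.card G.ConnectedComponent) := by
  have choose_eq_card (S : Finset (Fin n)) : (S.card * (n - S.card)).choose k =
      #{G | G ≤ cutGraph (S : Set (Fin n)) ∧ G.edgeSet.ncard = k} := by
    rw [card_filter_le_ncard_edgeSet_eq, ncard_edgeSet_cutGraph, ← coe_compl,
      Set.ncard_coe_finset, Set.ncard_coe_finset, card_compl, Fintype.card_fin]
  simp only [choose_eq_card, card_filter, sum_filter]
  rw [sum_comm]
  refine sum_congr rfl fun G _ => ?_
  by_cases hk : G.edgeSet.ncard = k
  · simp only [hk, and_true, ← card_filter, card_filter_le_cutGraph]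
  · simp [hk]

/-- `Σ_{S ⊆ {1,…,n}} C(|S|·(n−|S|), k) = Σ_G 2^{c(G)}`, the sum on the right running over
all bipartite simple graphs `G` on `{1,…,n}` with `k` edges, `c(G)` the number of
connected components. -/
theorem statement5 (n k : ℕ) (hn : 1 ≤ n) :
    ∑ S : Finset (Fin n), (S.card * (n - S.card)).choose k
      = ∑ G ∈ Finset.univ.filter
          (fun G : SimpleGraph (Fin n) => G.Colorable 2 ∧ G.edgeSet.ncard = k),
          2 ^ (Nat.card G.ConnectedComponent) :=
  statement5_general n k
end

section
/- The complement ℝ³ ∖ ⋃_{H ∈ 𝒥_3} H has exactly 64 connected components. -/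
open scoped Classical


/-- The hyperplane arrangement 𝒥ₙ, encoded as a finite set of pairs
(normal vector, constant): `H_{ij} : x_i + x_j = 1` for `i < j`,
`x_i = 0`, and `x_i = 1`. -/
noncomputable def Jn (n : ℕ) : Finset ((Fin n → ℝ) × ℝ) :=
  (((Finset.univ : Finset (Fin n × Fin n)).filter fun p => p.1 < p.2).image
      fun p => ((fun k => if k = p.1 ∨ k = p.2 then (1 : ℝ) else 0), (1 : ℝ)))
  ∪ (Finset.univ.image fun i : Fin n => (Pi.single i (1 : ℝ), (0 : ℝ)))
  ∪ (Finset.univ.image fun i : Fin n => (Pi.single i (1 : ℝ), (1 : ℝ)))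

/-- A subarrangement is central if the corresponding hyperplanes have a common point. -/
def IsCentral {n : ℕ} (B : Finset ((Fin n → ℝ) × ℝ)) : Prop :=
  ∃ x : Fin n → ℝ, ∀ p ∈ B, ∑ i, p.1 i * x i = p.2

/-- The rank of a subarrangement: dimension of the span of the normal vectors. -/
noncomputable def arrRank {n : ℕ} (B : Finset ((Fin n → ℝ) × ℝ)) : ℕ :=
  Module.finrank ℝ (Submodule.span ℝ (Prod.fst '' (B : Set ((Fin n → ℝ) × ℝ))))

/-- The characteristic polynomial `χ_𝒜(t) = Σ_ℬ (-1)^{|ℬ|} t^{n - rank ℬ}`,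
sum over central subarrangements ℬ of 𝒜. -/
noncomputable def charPoly {n : ℕ} (𝒜 : Finset ((Fin n → ℝ) × ℝ)) : Polynomial ℤ :=
  ∑ B ∈ 𝒜.powerset.filter (fun B => IsCentral B),
    (-1) ^ B.card * Polynomial.X ^ (n - arrRank B)

/-- The complement of the union of the hyperplanes of 𝒜. -/
def hypComplement {n : ℕ} (𝒜 : Finset ((Fin n → ℝ) × ℝ)) : Set (Fin n → ℝ) :=
  {x | ∀ p ∈ 𝒜, ∑ i, p.1 i * x i ≠ p.2}

/-- The chambers of 𝒜: connected components of the complement of the hyperplanes. -/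
def chambers {n : ℕ} (𝒜 : Finset ((Fin n → ℝ) × ℝ)) : Set (Set (Fin n → ℝ)) :=
  {C | ∃ x ∈ hypComplement 𝒜, C = connectedComponentIn (hypComplement 𝒜) x}

/-! Two points off the hyperplanes lie in the same chamber iff no hyperplane separates them:
the side of a hyperplane is constant on a connected set avoiding it, and the set of points on
prescribed sides of all hyperplanes is convex. So chambers correspond to the sign patterns that
are realized. For `𝒥₃` a sign pattern records which coordinates exceed `0` and `1` and which
pair sums exceed `1`. The implications `x i > 1 → x i > 0`, `x i ≤ 0 ∧ x j ≤ 1 → x i + x j ≤ 1`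
and `x i > 1 ∧ x j > 0 → x i + x j > 1` leave 64 of the 512 patterns, and each of these is
realized by an explicit point. -/

def SameSideOf (c a b : ℝ) : Prop := (c < a ∧ c < b) ∨ (a < c ∧ b < c)

def SameSide {n : ℕ} (𝒜 : Finset ((Fin n → ℝ) × ℝ)) (x y : Fin n → ℝ) : Prop :=
  ∀ p ∈ 𝒜, SameSideOf p.2 (∑ i, p.1 i * x i) (∑ i, p.1 i * y i)

section Chambers

variable {n : ℕ} {𝒜 : Finset ((Fin n → ℝ) × ℝ)} {x y : Fin n → ℝ}

theorem SameSide.mem_hypComplement (h : SameSide 𝒜 x y) : y ∈ hypComplement 𝒜 := fun p hp =>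
  (h p hp).elim (fun h => h.2.ne') (fun h => h.2.ne)

theorem sameSide_self (hx : x ∈ hypComplement 𝒜) : SameSide 𝒜 x x := fun p hp =>
  (hx p hp).lt_or_gt.elim (fun h => Or.inr ⟨h, h⟩) (fun h => Or.inl ⟨h, h⟩)

theorem convex_setOf_sameSide (x : Fin n → ℝ) : Convex ℝ {y | SameSide 𝒜 x y} := by
  intro y hy z hz a b ha hb hab p hp
  have hlin : ∑ i, p.1 i * (a • y + b • z) i = a • ∑ i, p.1 i * y i + b • ∑ i, p.1 i * z i := by
    simp only [Pi.add_apply, Pi.smul_apply, smul_eq_mul, Finset.mul_sum, ← Finset.sum_add_distrib]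
    exact Finset.sum_congr rfl fun i _ => by ring
  rw [SameSideOf, hlin]
  rcases hy p hp with ⟨hx, hy⟩ | ⟨hx, hy⟩ <;> rcases hz p hp with ⟨hx', hz⟩ | ⟨hx', hz⟩
  · exact Or.inl ⟨hx, Set.mem_Ioi.1 (convex_Ioi _ hy hz ha hb hab)⟩
  · exact absurd hx' hx.not_gt
  · exact absurd hx' hx.not_gt
  · exact Or.inr ⟨hx, Set.mem_Iio.1 (convex_Iio _ hy hz ha hb hab)⟩

theorem sameSide_of_mem_connectedComponentIn
    (hy : y ∈ connectedComponentIn (hypComplement 𝒜) x) : SameSide 𝒜 x y := by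
  have hx : x ∈ connectedComponentIn (hypComplement 𝒜) x :=
    mem_connectedComponentIn (connectedComponentIn_nonempty_iff.mp ⟨y, hy⟩)
  intro p hp
  have hf : Continuous fun z : Fin n → ℝ => ∑ i, p.1 i * z i := by fun_prop
  have hcover : connectedComponentIn (hypComplement 𝒜) x ⊆
      {z | p.2 < ∑ i, p.1 i * z i} ∪ {z | ∑ i, p.1 i * z i < p.2} := fun z hz =>
    (connectedComponentIn_subset _ _ hz p hp).lt_or_gt.symm
  have hdisj : Disjoint {z : Fin n → ℝ | p.2 < ∑ i, p.1 i * z i} {z | ∑ i, p.1 i * z i < p.2} :=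
    Set.disjoint_left.2 fun _ (h : p.2 < _) h' => lt_asymm h h'
  rcases isPreconnected_connectedComponentIn.subset_or_subset (isOpen_lt continuous_const hf)
      (isOpen_lt hf continuous_const) hdisj hcover with h | h
  · exact Or.inl ⟨h hx, h hy⟩
  · exact Or.inr ⟨h hx, h hy⟩

theorem connectedComponentIn_hypComplement (hx : x ∈ hypComplement 𝒜) :
    connectedComponentIn (hypComplement 𝒜) x = {y | SameSide 𝒜 x y} :=
  (Set.Subset.antisymm fun _ => sameSide_of_mem_connectedComponentIn) <|
    (convex_setOf_sameSide x).isPreconnected.subset_connectedComponentIn (sameSide_self hx)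
      fun _ => SameSide.mem_hypComplement

theorem ncard_chambers_eq {β : Type*} (σ : (Fin n → ℝ) → β)
    (hσ : ∀ x ∈ hypComplement 𝒜, ∀ y ∈ hypComplement 𝒜, σ x = σ y ↔ SameSide 𝒜 x y) :
    (chambers 𝒜).ncard = (σ '' hypComplement 𝒜).ncard := by
  set cell : β → Set (Fin n → ℝ) := fun s => {y | y ∈ hypComplement 𝒜 ∧ σ y = s}
  have hcell : ∀ x ∈ hypComplement 𝒜,
      connectedComponentIn (hypComplement 𝒜) x = cell (σ x) := by
    intro x hx
    rw [connectedComponentIn_hypComplement hx]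
    ext y
    exact ⟨fun h => ⟨h.mem_hypComplement, ((hσ x hx y h.mem_hypComplement).2 h).symm⟩,
      fun h => (hσ x hx y h.1).1 h.2.symm⟩
  have hchambers : chambers 𝒜 = cell '' (σ '' hypComplement 𝒜) := by
    rw [Set.image_image]
    ext C
    exact ⟨fun ⟨x, hx, hC⟩ => ⟨x, hx, (hC.trans (hcell x hx)).symm⟩,
      fun ⟨x, hx, hC⟩ => ⟨x, hx, hC.symm.trans (hcell x hx).symm⟩⟩
  rw [hchambers, Set.InjOn.ncard_image]
  rintro _ ⟨x, hx, rfl⟩ _ - h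
  have hx' : x ∈ cell (σ x) := ⟨hx, rfl⟩
  rw [h] at hx'
  exact hx'.2

end Chambers

section Jn

variable {n : ℕ}

theorem forall_mem_Jn {P : (Fin n → ℝ) × ℝ → Prop} :
    (∀ p ∈ Jn n, P p) ↔
      (∀ i j : Fin n, i < j → P (fun k => if k = i ∨ k = j then 1 else 0, 1)) ∧
        (∀ i, P (Pi.single i 1, 0)) ∧ ∀ i, P (Pi.single i 1, 1) := by
  simp only [Jn, Finset.forall_mem_union, Finset.forall_mem_image, Finset.mem_filter,
    Finset.mem_univ, true_and, forall_const, Prod.forall, and_assoc]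

theorem sum_indicator_pair_mul {i j : Fin n} (hij : i ≠ j) (x : Fin n → ℝ) :
    ∑ k, (if k = i ∨ k = j then 1 else 0) * x k = x i + x j := by
  simp [ite_mul, Finset.sum_ite, Finset.filter_or, Finset.filter_eq', hij]

theorem sum_single_mul (i : Fin n) (x : Fin n → ℝ) :
    ∑ k, (Pi.single i 1 : Fin n → ℝ) k * x k = x i := by
  simp [Pi.single_apply]

theorem mem_hypComplement_Jn {x : Fin n → ℝ} :
    x ∈ hypComplement (Jn n) ↔
      (∀ i j : Fin n, i < j → x i + x j ≠ 1) ∧ (∀ i, x i ≠ 0) ∧ ∀ i, x i ≠ 1 := by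
  simp +contextual only [hypComplement, Set.mem_ofPred_eq, forall_mem_Jn, sum_single_mul,
    sum_indicator_pair_mul (ne_of_lt _)]

theorem sameSide_Jn {x y : Fin n → ℝ} :
    SameSide (Jn n) x y ↔
      (∀ i j : Fin n, i < j → SameSideOf 1 (x i + x j) (y i + y j)) ∧
        (∀ i, SameSideOf 0 (x i) (y i)) ∧ ∀ i, SameSideOf 1 (x i) (y i) := by
  simp +contextual only [SameSide, forall_mem_Jn, sum_single_mul,
    sum_indicator_pair_mul (ne_of_lt _)]

end Jn

section J3

def pairIdx : Fin 3 → Fin 3 × Fin 3 := ![(0, 1), (0, 2), (1, 2)]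

theorem forall_lt_iff_forall_pairIdx {P : Fin 3 → Fin 3 → Prop} :
    (∀ i j : Fin 3, i < j → P i j) ↔ ∀ k, P (pairIdx k).1 (pairIdx k).2 := by
  simp [Fin.forall_fin_succ, pairIdx, and_assoc]

abbrev SignData := (Fin 3 → Bool) × (Fin 3 → Bool) × (Fin 3 → Bool)

def signPattern {K : Type*} [Field K] [LinearOrder K] (x : Fin 3 → K) : SignData :=
  (fun k => decide (1 < x (pairIdx k).1 + x (pairIdx k).2), fun i => decide (0 < x i),
    fun i => decide (1 < x i))

def AvoidsJ3 {K : Type*} [Field K] [LinearOrder K] (x : Fin 3 → K) : Prop :=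
  (∀ k, x (pairIdx k).1 + x (pairIdx k).2 ≠ 1) ∧ (∀ i, x i ≠ 0) ∧ ∀ i, x i ≠ 1

instance {K : Type*} [Field K] [LinearOrder K] : DecidablePred (AvoidsJ3 (K := K)) :=
  fun _ => by unfold AvoidsJ3; infer_instance

theorem mem_hypComplement_J3 {x : Fin 3 → ℝ} : x ∈ hypComplement (Jn 3) ↔ AvoidsJ3 x := by
  rw [mem_hypComplement_Jn, forall_lt_iff_forall_pairIdx (P := fun i j => x i + x j ≠ 1)]
  rfl

theorem decide_lt_eq_decide_lt_iff {c a b : ℝ} (ha : a ≠ c) (hb : b ≠ c) :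
    decide (c < a) = decide (c < b) ↔ SameSideOf c a b := by
  rcases ha.lt_or_gt with ha | ha <;> rcases hb.lt_or_gt with hb | hb <;>
    simp [SameSideOf, ha, hb, ha.not_gt, hb.not_gt]

theorem signPattern_eq_iff {x y : Fin 3 → ℝ} (hx : x ∈ hypComplement (Jn 3))
    (hy : y ∈ hypComplement (Jn 3)) : signPattern x = signPattern y ↔ SameSide (Jn 3) x y := by
  obtain ⟨hx₁, hx₂, hx₃⟩ := mem_hypComplement_J3.1 hx
  obtain ⟨hy₁, hy₂, hy₃⟩ := mem_hypComplement_J3.1 hy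
  rw [sameSide_Jn,
    forall_lt_iff_forall_pairIdx (P := fun i j => SameSideOf 1 (x i + x j) (y i + y j))]
  simp only [signPattern, Prod.mk.injEq, funext_iff, decide_lt_eq_decide_lt_iff (hx₁ _) (hy₁ _),
    decide_lt_eq_decide_lt_iff (hx₂ _) (hy₂ _), decide_lt_eq_decide_lt_iff (hx₃ _) (hy₃ _)]

def PairCompatible (pos big : Fin 3 → Bool) (i j : Fin 3) (b : Bool) : Prop :=
  (pos i = false → big j = false → b = false) ∧ (big i = true → pos j = true → b = true)

def Admissible : SignData → Prop
  | (sum, pos, big) => (∀ i, big i = true → pos i = true) ∧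
      ∀ k, PairCompatible pos big (pairIdx k).1 (pairIdx k).2 (sum k) ∧
        PairCompatible pos big (pairIdx k).2 (pairIdx k).1 (sum k)

instance : DecidablePred Admissible := fun _ => by
  unfold Admissible PairCompatible; infer_instance

theorem admissible_signPattern (x : Fin 3 → ℝ) : Admissible (signPattern x) := by
  have hpair : ∀ i j, PairCompatible (fun i => decide (0 < x i)) (fun i => decide (1 < x i)) i j
      (decide (1 < x i + x j)) := by
    intro i j
    simp only [PairCompatible, decide_eq_false_iff_not, decide_eq_true_eq, not_lt]
    exact ⟨fun _ _ => by linarith, fun _ _ => by linarith⟩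
  refine ⟨fun i h => ?_, fun k => ⟨hpair _ _, ?_⟩⟩
  · simp only [decide_eq_true_eq] at h ⊢
    linarith
  · simpa only [add_comm] using hpair (pairIdx k).2 (pairIdx k).1

theorem card_admissible : (Finset.univ.filter Admissible).card = 64 := by
  decide +kernel

/-- A point in each chamber of `𝒥₃`, taken from the grid
`{-0.3, -0.1, 0.2, 0.4, 0.7, 0.9, 1.2, 1.4}³`. -/
def samplePoints : List (Fin 3 → ℚ) :=
  [![-0.3, -0.3, 1.2], ![-0.3, -0.1, 1.2], ![-0.3, 0.2, 1.2], ![-0.3, 1.2, -0.3],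
   ![-0.3, 1.2, -0.1], ![-0.3, 1.2, 0.2], ![-0.3, 1.2, 1.2], ![-0.3, 1.2, 1.4],
   ![-0.3, 1.4, 1.2], ![-0.1, -0.3, 1.2], ![-0.1, -0.1, -0.1], ![-0.1, -0.1, 0.2],
   ![-0.1, -0.1, 1.2], ![-0.1, 0.2, -0.1], ![-0.1, 0.2, 0.2], ![-0.1, 0.2, 0.9],
   ![-0.1, 0.2, 1.2], ![-0.1, 1.2, -0.3], ![-0.1, 1.2, -0.1], ![-0.1, 1.2, 0.2],
   ![-0.1, 1.2, 1.2], ![0.2, -0.3, 1.2], ![0.2, -0.1, -0.1], ![0.2, -0.1, 0.2],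
   ![0.2, -0.1, 0.9], ![0.2, -0.1, 1.2], ![0.2, 0.2, -0.1], ![0.2, 0.2, 0.2],
   ![0.2, 0.2, 0.9], ![0.2, 0.2, 1.2], ![0.2, 0.4, 0.7], ![0.2, 0.9, -0.1],
   ![0.2, 0.9, 0.2], ![0.2, 0.9, 1.2], ![0.2, 1.2, -0.3], ![0.2, 1.2, -0.1],
   ![0.2, 1.2, 0.2], ![0.2, 1.2, 0.9], ![0.2, 1.2, 1.2], ![0.4, 0.2, 0.7],
   ![0.4, 0.7, 0.2], ![0.4, 0.7, 0.7], ![0.9, 0.2, 0.2], ![1.2, -0.3, -0.3],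
   ![1.2, -0.3, -0.1], ![1.2, -0.3, 0.2], ![1.2, -0.3, 1.2], ![1.2, -0.3, 1.4],
   ![1.2, -0.1, -0.3], ![1.2, -0.1, -0.1], ![1.2, -0.1, 0.2], ![1.2, -0.1, 1.2],
   ![1.2, 0.2, -0.3], ![1.2, 0.2, -0.1], ![1.2, 0.2, 0.2], ![1.2, 0.2, 0.9],
   ![1.2, 0.2, 1.2], ![1.2, 1.2, -0.3], ![1.2, 1.2, -0.1], ![1.2, 1.2, 0.2],
   ![1.2, 1.2, 1.2], ![1.2, 1.4, -0.3], ![1.4, -0.3, 1.2], ![1.4, 1.2, -0.3]]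

theorem avoidsJ3_of_mem_samplePoints : ∀ q ∈ samplePoints, AvoidsJ3 q := by
  decide +kernel

theorem nodup_map_signPattern_samplePoints : (samplePoints.map signPattern).Nodup := by
  decide +kernel

theorem signPattern_ratCast (q : Fin 3 → ℚ) :
    signPattern (fun i => (q i : ℝ)) = signPattern q := by
  simp only [signPattern, Prod.mk.injEq]
  norm_cast

theorem AvoidsJ3.ratCast {q : Fin 3 → ℚ} (h : AvoidsJ3 q) : AvoidsJ3 fun i => (q i : ℝ) := by
  obtain ⟨h₁, h₂, h₃⟩ := h
  refine ⟨fun k => ?_, fun i => ?_, fun i => ?_⟩ <;> dsimp only <;> norm_cast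
  exacts [h₁ k, h₂ i, h₃ i]

theorem ncard_image_signPattern : (signPattern '' hypComplement (Jn 3)).ncard = 64 := by
  apply le_antisymm
  · calc _ ≤ ((Finset.univ.filter Admissible : Finset SignData) : Set SignData).ncard :=
          Set.ncard_le_ncard <| by
            rintro _ ⟨x, -, rfl⟩
            simpa using admissible_signPattern x
      _ = 64 := by rw [Set.ncard_coe_finset, card_admissible]
  · calc 64 = ((samplePoints.map signPattern).toFinset : Set SignData).ncard := by
          rw [Set.ncard_coe_finset, List.toFinset_card_of_nodup nodup_map_signPattern_samplePoints]
          rfl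
      _ ≤ (signPattern '' hypComplement (Jn 3)).ncard := Set.ncard_le_ncard fun s hs => by
          obtain ⟨q, hq, rfl⟩ := List.mem_map.1 (List.mem_toFinset.1 hs)
          exact ⟨_, mem_hypComplement_J3.2 (avoidsJ3_of_mem_samplePoints q hq).ratCast,
            signPattern_ratCast q⟩

end J3

/-- The complement of the union of the hyperplanes of `𝒥₃` has exactly 64 connected
components. -/
theorem statement18 : (chambers (Jn 3)).ncard = 64 := by
  rw [ncard_chambers_eq signPattern fun _ hx _ hy => signPattern_eq_iff hx hy,
    ncard_image_signPattern]
end
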